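/- arXiv:2308.14476 — 3 statements merged into one kernel-verified Lean document; each statement's English description precedes it below -/
import Mathlib

section
/- For every visit sequence σ and all real start times t ≤ t′, the duration satisfies D_σ(t′) ≤ D_σ(t) and t + D_σ(t) ≤ t′ + D_σ(t′); that is, D_σ is nonincreasing in the start time and the finishing-time proxy t ↦ t + D_σ(t) is nondecreasing (equivalently, D_σ is nonincreasing and 1-Lipschitz). -/
/-- Arrival times of a visit sequence started at time `t`:
`a 0 = t`, `a (k+1) = s k + μ k + δ k` where `s k = min (max (a k) (e k)) (l k)`. -/
noncomputable def arrive (μ e l δ : ℕ → ℝ) (t : ℝ) : ℕ → ℝ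
  | 0 => t
  | k + 1 => min (max (arrive μ e l δ t k) (e k)) (l k) + μ k + δ k

/-- Service start times with time warp. -/
noncomputable def serve (μ e l δ : ℕ → ℝ) (t : ℝ) (k : ℕ) : ℝ :=
  min (max (arrive μ e l δ t k) (e k)) (l k)

/-- Total time warp of a visit sequence of length `n+1` started at time `t`. -/
noncomputable def timeWarp (n : ℕ) (μ e l δ : ℕ → ℝ) (t : ℝ) : ℝ :=
  ∑ k ∈ Finset.range (n + 1), max (arrive μ e l δ t k - l k) 0

/-- Total waiting time of a visit sequence of length `n+1` started at time `t`. -/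
noncomputable def waiting (n : ℕ) (μ e l δ : ℕ → ℝ) (t : ℝ) : ℝ :=
  ∑ k ∈ Finset.range (n + 1), max (e k - arrive μ e l δ t k) 0

/-- Duration of a visit sequence of length `n+1` started at time `t`. -/
noncomputable def duration (n : ℕ) (μ e l δ : ℕ → ℝ) (t : ℝ) : ℝ :=
  (∑ k ∈ Finset.range (n + 1), μ k) + (∑ k ∈ Finset.range n, δ k) +
    waiting n μ e l δ t

/-!
Arrival times are monotone in the start time, so every waiting term `max (e k - a k) 0` can
only shrink when the start is delayed. For the second inequality, write the clamp as
`min (max a e) l = a + max (e - a) 0 - max (a - l) 0`: unrolling the recursion, the start time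
plus the total waiting equals the final arrival time plus the total time warp, up to a
constant. Both of the latter are nondecreasing in the start time.
-/

open Finset

section VisitSequence

variable (μ e l δ : ℕ → ℝ)

theorem min_max_eq_add_sub {a lo hi : ℝ} (h : lo ≤ hi) :
    min (max a lo) hi = a + max (lo - a) 0 - max (a - hi) 0 := by
  rcases le_total a lo with h₁ | h₁ <;> rcases le_total a hi with h₂ | h₂ <;>
    simp only [max_eq_left, max_eq_right, min_eq_left, min_eq_right, sub_nonneg,
      sub_nonpos, *] <;> linarith

theorem monotone_arrive (k : ℕ) : Monotone fun t => arrive μ e l δ t k := by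
  intro t t' ht
  induction k with
  | zero => exact ht
  | succ k ih =>
    simp only [arrive]
    gcongr

theorem antitone_waiting (n : ℕ) : Antitone (waiting n μ e l δ) := fun _ _ ht =>
  sum_le_sum fun k _ => by gcongr; exact monotone_arrive μ e l δ k ht

theorem monotone_timeWarp (n : ℕ) : Monotone (timeWarp n μ e l δ) := fun _ _ ht =>
  sum_le_sum fun k _ => by gcongr; exact monotone_arrive μ e l δ k ht

theorem arrive_succ_eq {k : ℕ} (h : e k ≤ l k) (t : ℝ) :
    arrive μ e l δ t (k + 1) = arrive μ e l δ t k + max (e k - arrive μ e l δ t k) 0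
      - max (arrive μ e l δ t k - l k) 0 + μ k + δ k := by
  rw [arrive, min_max_eq_add_sub h]

theorem add_waiting_eq (n : ℕ) (hel : ∀ k ≤ n, e k ≤ l k) (t : ℝ) :
    t + waiting n μ e l δ t = arrive μ e l δ t (n + 1) + timeWarp n μ e l δ t
      - ∑ k ∈ range (n + 1), (μ k + δ k) := by
  induction n with
  | zero =>
    simp only [waiting, timeWarp, zero_add, sum_range_one, arrive_succ_eq μ e l δ (hel 0 le_rfl)]
    rw [arrive]
    ring
  | succ n ih =>
    have ih := ih fun k hk => hel k (by omega)
    simp only [waiting, timeWarp] at ih ⊢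
    rw [sum_range_succ _ (n + 1), ← add_assoc, ih, sum_range_succ _ (n + 1),
      sum_range_succ _ (n + 1), arrive_succ_eq μ e l δ (hel (n + 1) le_rfl)]
    ring

theorem antitone_duration (n : ℕ) : Antitone (duration n μ e l δ) := fun _ _ ht => by
  simp only [duration]
  gcongr
  exact antitone_waiting μ e l δ n ht

theorem monotone_add_duration (n : ℕ) (hel : ∀ k ≤ n, e k ≤ l k) :
    Monotone fun t => t + duration n μ e l δ t := by
  have h_eq (t : ℝ) : t + duration n μ e l δ t =
      arrive μ e l δ t (n + 1) + timeWarp n μ e l δ t - δ n := by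
    have := add_waiting_eq μ e l δ n hel t
    simp only [duration, sum_add_distrib, sum_range_succ _ n] at this ⊢
    linarith
  intro t t' ht
  simp only [h_eq]
  linarith [monotone_arrive μ e l δ (n + 1) ht, monotone_timeWarp μ e l δ n ht]

end VisitSequence

theorem duration_antitone_lipschitz_general
    (n : ℕ) (μ e l δ : ℕ → ℝ)
    (hel : ∀ k ≤ n, e k ≤ l k)
    (t t' : ℝ) (ht : t ≤ t') :
    duration n μ e l δ t' ≤ duration n μ e l δ t ∧
    t + duration n μ e l δ t ≤ t' + duration n μ e l δ t' :=
  ⟨antitone_duration μ e l δ n ht, monotone_add_duration μ e l δ n hel ht⟩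

/-- The duration is nonincreasing in the start time, and the finishing-time proxy
is nondecreasing (equivalently, the duration is nonincreasing and 1-Lipschitz). -/
theorem duration_antitone_lipschitz
    (n : ℕ) (μ e l δ : ℕ → ℝ)
    (hμ : ∀ k ≤ n, 0 ≤ μ k) (hel : ∀ k ≤ n, e k ≤ l k) (hδ : ∀ k < n, 0 ≤ δ k)
    (t t' : ℝ) (ht : t ≤ t') :
    duration n μ e l δ t' ≤ duration n μ e l δ t ∧
    t + duration n μ e l δ t ≤ t' + duration n μ e l δ t' :=
  duration_antitone_lipschitz_general n μ e l δ hel t t' ht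
end

section
/- For every visit sequence σ there exist unique real numbers TW(σ) and L(σ) with TW(σ) ≥ 0 such that for all start times t ∈ ℝ, the total time warp satisfies TW_σ(t) = TW(σ) + max{t − L(σ), 0}; in particular, TW(σ) is the minimum time warp of σ, attained exactly for start times t ≤ L(σ). -/
/-!
Both `TW_n(t)` and `TW_n(t) + s_n(t)` are hinge functions `t ↦ max (t + d) c` of the start time.
The step `n → n + 1` preserves this because clamping an arrival `a` into `[e, ℓ]` satisfies
`max (a - ℓ) 0 + min (max a e) ℓ = max a e`: the warp added at a visit plus its service start is
the arrival only clamped from below. The constant `c`, the time warp for very early starts, is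
nonnegative, and `max (t + d) c = c + max (t - (c - d)) 0` pins down `TW(σ) = c`, `L(σ) = c - d`.
-/

lemma max_sub_zero_add_min_max {a e l : ℝ} (h : e ≤ l) :
    max (a - l) 0 + min (max a e) l = max a e := by
  simp only [max_def, min_def]; split_ifs <;> linarith

lemma max_add_max_sub_max_add (t A B c d x y : ℝ) :
    max (t + d) c + max (max (t + A) B - max (t + d) c + x) y
      = max (t + max (A + x) (d + y)) (max (B + x) (c + y)) := by
  simp only [max_def]; split_ifs <;> linarith

lemma max_add_eq_add_max_sub (t c d : ℝ) : max (t + d) c = c + max (t - (c - d)) 0 := by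
  simp only [max_def]; split_ifs <;> linarith

lemma eq_of_add_max_sub_eq {c L c' L' : ℝ}
    (h : ∀ t, c + max (t - L) 0 = c' + max (t - L') 0) : c = c' ∧ L = L' := by
  have hc : c = c' := by
    simpa [max_eq_right (sub_nonpos.mpr (min_le_left L L')),
      max_eq_right (sub_nonpos.mpr (min_le_right L L'))] using h (min L L')
  subst hc
  have hLL' : max (L - L') 0 = 0 := by simpa using (h L).symm
  have hL'L : max (L' - L) 0 = 0 := by simpa using h L'
  refine ⟨rfl, le_antisymm ?_ ?_⟩
  · linarith [le_max_left (L - L') 0]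
  · linarith [le_max_left (L' - L) 0]

section Schedule

variable (μ e l δ : ℕ → ℝ)

lemma arrive_succ (n : ℕ) (t : ℝ) :
    arrive μ e l δ t (n + 1) = serve μ e l δ t n + μ n + δ n :=
  rfl

lemma timeWarp_succ (n : ℕ) (t : ℝ) :
    timeWarp (n + 1) μ e l δ t
      = timeWarp n μ e l δ t + max (serve μ e l δ t n + μ n + δ n - l (n + 1)) 0 :=
  Finset.sum_range_succ _ _

lemma timeWarp_succ_add_serve_succ (n : ℕ) (t : ℝ) (h : e (n + 1) ≤ l (n + 1)) :
    timeWarp (n + 1) μ e l δ t + serve μ e l δ t (n + 1)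
      = timeWarp n μ e l δ t + max (serve μ e l δ t n + μ n + δ n) (e (n + 1)) := by
  rw [timeWarp_succ, add_assoc, ← arrive_succ, serve, max_sub_zero_add_min_max h, arrive_succ]

lemma exists_timeWarp_eq_max_add (n : ℕ) (hel : ∀ k ≤ n, e k ≤ l k) :
    ∃ c d A B : ℝ, 0 ≤ c ∧ ∀ t : ℝ,
      timeWarp n μ e l δ t = max (t + d) c ∧
      timeWarp n μ e l δ t + serve μ e l δ t n = max (t + A) B := by
  induction n with
  | zero =>
    refine ⟨0, -l 0, 0, e 0, le_rfl, fun t => ⟨?_, ?_⟩⟩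
    · simp [timeWarp, arrive, sub_eq_add_neg]
    · simpa [timeWarp, serve, arrive] using max_sub_zero_add_min_max (a := t) (hel 0 le_rfl)
  | succ n ih =>
    obtain ⟨c, d, A, B, hc, hf⟩ := ih fun k hk => hel k (hk.trans n.le_succ)
    have hs (t : ℝ) : serve μ e l δ t n = max (t + A) B - max (t + d) c := by
      linarith [hf t]
    refine ⟨max (B + (μ n + δ n - l (n + 1))) (c + 0),
      max (A + (μ n + δ n - l (n + 1))) (d + 0),
      max (A + (μ n + δ n)) (d + e (n + 1)), max (B + (μ n + δ n)) (c + e (n + 1)),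
      hc.trans (by simp), fun t => ⟨?_, ?_⟩⟩
    · rw [timeWarp_succ, add_assoc, hs, (hf t).1, add_sub_assoc, max_add_max_sub_max_add]
    · rw [timeWarp_succ_add_serve_succ _ _ _ _ _ _ (hel _ le_rfl), add_assoc, hs, (hf t).1,
        max_add_max_sub_max_add]

end Schedule

theorem timeWarp_representation_general
    (n : ℕ) (μ e l δ : ℕ → ℝ)
    (hel : ∀ k ≤ n, e k ≤ l k) :
    (∃! p : ℝ × ℝ, 0 ≤ p.1 ∧
        ∀ t : ℝ, timeWarp n μ e l δ t = p.1 + max (t - p.2) 0) ∧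
    ∀ TWmin L : ℝ,
      (0 ≤ TWmin ∧ ∀ t : ℝ, timeWarp n μ e l δ t = TWmin + max (t - L) 0) →
        ∀ t : ℝ, TWmin ≤ timeWarp n μ e l δ t ∧
          (timeWarp n μ e l δ t = TWmin ↔ t ≤ L) := by
  obtain ⟨c, d, _, _, hc, hf⟩ := exists_timeWarp_eq_max_add μ e l δ n hel
  have hform (t : ℝ) : timeWarp n μ e l δ t = c + max (t - (c - d)) 0 := by
    rw [(hf t).1, max_add_eq_add_max_sub]
  refine ⟨⟨(c, c - d), ⟨hc, hform⟩, fun ⟨c', L'⟩ ⟨_, h'⟩ => ?_⟩, ?_⟩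
  · obtain ⟨hc', hL'⟩ := eq_of_add_max_sub_eq fun t => (h' t).symm.trans (hform t)
    exact Prod.ext hc' hL'
  · rintro TWmin L ⟨-, hrep⟩ t
    rw [hrep]
    refine ⟨le_add_of_nonneg_right (le_max_right _ _), ?_⟩
    rw [add_eq_left, max_eq_right_iff, sub_nonpos]

/-- There exist unique constants TW(σ) ≥ 0 and L(σ) such that
TW_σ(t) = TW(σ) + max (t - L(σ)) 0 for all t; in particular TW(σ) is the
minimum time warp, attained exactly for start times t ≤ L(σ). -/
theorem timeWarp_representation
    (n : ℕ) (μ e l δ : ℕ → ℝ)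
    (hμ : ∀ k ≤ n, 0 ≤ μ k) (hel : ∀ k ≤ n, e k ≤ l k) (hδ : ∀ k < n, 0 ≤ δ k) :
    (∃! p : ℝ × ℝ, 0 ≤ p.1 ∧
        ∀ t : ℝ, timeWarp n μ e l δ t = p.1 + max (t - p.2) 0) ∧
    ∀ TWmin L : ℝ,
      (0 ≤ TWmin ∧ ∀ t : ℝ, timeWarp n μ e l δ t = TWmin + max (t - L) 0) →
        ∀ t : ℝ, TWmin ≤ timeWarp n μ e l δ t ∧
          (timeWarp n μ e l δ t = TWmin ↔ t ≤ L) :=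
  timeWarp_representation_general n μ e l δ hel
end

section
/- For all visit sequences σ (length m+1) and σ′ (length n+1), every connecting travel time δ ≥ 0, and every start time t ∈ ℝ, the schedule of the concatenation σ ⊕ δ ⊕ σ′ decomposes as follows: setting b(t) = t + D_σ(t) − TW_σ(t) + δ (the arrival time at the first visit of σ′), one has TW_{σ⊕δ⊕σ′}(t) = TW_σ(t) + TW_{σ′}(b(t)) and D_{σ⊕δ⊕σ′}(t) = D_σ(t) + δ + D_{σ′}(b(t)). -/
/-- Visit data of the concatenation `σ ⊕ δ ⊕ σ′`: the first `m+1` visits come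
from `σ` (data `f`), the remaining ones from `σ′` (data `f'`). -/
noncomputable def catV (m : ℕ) (f f' : ℕ → ℝ) (k : ℕ) : ℝ :=
  if k ≤ m then f k else f' (k - (m + 1))

/-- Travel times of the concatenation `σ ⊕ δ ⊕ σ′`: the first `m` edges come from
`σ`, the connecting edge from visit `m` to visit `m+1` has travel time `c`, and
the remaining edges come from `σ′`. -/
noncomputable def catE (m : ℕ) (δ δ' : ℕ → ℝ) (c : ℝ) (k : ℕ) : ℝ :=
  if k < m then δ k else if k = m then c else δ' (k - (m + 1))
/-!
When `e ≤ ℓ`, clamping the arrival `a` into `[e, ℓ]` gives `a + max (e - a) 0 - max (a - ℓ) 0`,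
so the arrival times telescope: the arrival at visit `m + 1` is `t + D_σ(t) - TW_σ(t) + δ`.
Restarting the arrival recursion there runs exactly the schedule of `σ′`, and time warp and
waiting are sums of per-visit terms of the arrival times, so both split at the junction.
-/

section Schedule

variable {μ e l δ : ℕ → ℝ} {t : ℝ}

theorem arrive_add (k j : ℕ) :
    arrive μ e l δ t (k + j) =
      arrive (μ ∘ (k + ·)) (e ∘ (k + ·)) (l ∘ (k + ·)) (δ ∘ (k + ·))
        (arrive μ e l δ t k) j := by
  induction j with
  | zero => rfl
  | succ j ih =>
    show arrive μ e l δ t (k + j + 1) = _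
    simp only [arrive, ih, Function.comp_apply]

theorem arrive_congr {μ₂ e₂ l₂ δ₂ : ℕ → ℝ} {k : ℕ}
    (h : ∀ i < k, μ i = μ₂ i ∧ e i = e₂ i ∧ l i = l₂ i ∧ δ i = δ₂ i) :
    arrive μ e l δ t k = arrive μ₂ e₂ l₂ δ₂ t k := by
  induction k with
  | zero => rfl
  | succ k ih =>
    obtain ⟨hμ, he, hl, hδ⟩ := h k k.lt_succ_self
    simp only [arrive, ih fun i hi => h i (hi.trans k.lt_succ_self), hμ, he, hl, hδ]

theorem min_max_eq_add_max_sub_max {α : Type*} [AddCommGroup α] [LinearOrder α]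
    [IsOrderedAddMonoid α] {a e l : α} (h : e ≤ l) :
    min (max a e) l = a + max (e - a) 0 - max (a - l) 0 := by
  rcases le_total a e with hae | hae
  · rw [max_eq_right hae, min_eq_left h, max_eq_left (sub_nonneg.2 hae),
      max_eq_right (sub_nonpos.2 (hae.trans h))]
    abel
  rw [max_eq_left hae, max_eq_right (sub_nonpos.2 hae)]
  rcases le_total a l with hal | hal
  · rw [min_eq_left hal, max_eq_right (sub_nonpos.2 hal)]
    abel
  · rw [min_eq_right hal, max_eq_left (sub_nonneg.2 hal)]
    abel

theorem arrive_succ_of_le {k : ℕ} (h : e k ≤ l k) :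
    arrive μ e l δ t (k + 1) =
      arrive μ e l δ t k + max (e k - arrive μ e l δ t k) 0
        - max (arrive μ e l δ t k - l k) 0 + μ k + δ k := by
  rw [arrive, min_max_eq_add_max_sub_max h]

theorem arrive_succ_eq_duration_sub_timeWarp {n : ℕ} (hel : ∀ k ≤ n, e k ≤ l k) :
    arrive μ e l δ t (n + 1) =
      t + duration n μ e l δ t - timeWarp n μ e l δ t + δ n := by
  induction n with
  | zero =>
    rw [arrive_succ_of_le (hel 0 le_rfl)]
    simp [duration, timeWarp, waiting, arrive]
    ring
  | succ n ih =>
    have ih := ih fun k hk => hel k (hk.trans n.le_succ)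
    rw [arrive_succ_of_le (hel _ le_rfl)]
    simp only [duration, timeWarp, waiting, Finset.sum_range_succ] at ih ⊢
    linarith

theorem timeWarp_add (m n : ℕ) :
    timeWarp (m + n + 1) μ e l δ t =
      timeWarp m μ e l δ t +
        timeWarp n (μ ∘ (m + 1 + ·)) (e ∘ (m + 1 + ·)) (l ∘ (m + 1 + ·)) (δ ∘ (m + 1 + ·))
          (arrive μ e l δ t (m + 1)) := by
  simp only [timeWarp, show m + n + 1 + 1 = m + 1 + (n + 1) by omega, Finset.sum_range_add,
    arrive_add, Function.comp_apply]

theorem waiting_add (m n : ℕ) :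
    waiting (m + n + 1) μ e l δ t =
      waiting m μ e l δ t +
        waiting n (μ ∘ (m + 1 + ·)) (e ∘ (m + 1 + ·)) (l ∘ (m + 1 + ·)) (δ ∘ (m + 1 + ·))
          (arrive μ e l δ t (m + 1)) := by
  simp only [waiting, show m + n + 1 + 1 = m + 1 + (n + 1) by omega, Finset.sum_range_add,
    arrive_add, Function.comp_apply]

theorem duration_add (m n : ℕ) :
    duration (m + n + 1) μ e l δ t =
      duration m μ e l δ t + δ m +
        duration n (μ ∘ (m + 1 + ·)) (e ∘ (m + 1 + ·)) (l ∘ (m + 1 + ·)) (δ ∘ (m + 1 + ·))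
          (arrive μ e l δ t (m + 1)) := by
  unfold duration
  rw [waiting_add, show m + n + 1 + 1 = m + 1 + (n + 1) by omega,
    show m + n + 1 = m + 1 + n by omega, Finset.sum_range_add μ (m + 1),
    Finset.sum_range_add δ (m + 1), Finset.sum_range_succ δ m]
  simp only [Function.comp_apply]
  ring

end Schedule

section Concatenation

variable {m : ℕ}

@[simp]
theorem catV_of_le {f f' : ℕ → ℝ} {k : ℕ} (hk : k ≤ m) : catV m f f' k = f k := if_pos hk

@[simp]
theorem catV_comp_add (f f' : ℕ → ℝ) : catV m f f' ∘ (m + 1 + ·) = f' := by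
  ext j
  simp [catV, show ¬ m + 1 + j ≤ m by omega]

@[simp]
theorem catE_of_lt {δ δ' : ℕ → ℝ} {c : ℝ} {k : ℕ} (hk : k < m) : catE m δ δ' c k = δ k :=
  if_pos hk

@[simp]
theorem catE_self (δ δ' : ℕ → ℝ) (c : ℝ) : catE m δ δ' c m = c := by
  simp [catE]

@[simp]
theorem catE_comp_add (δ δ' : ℕ → ℝ) (c : ℝ) : catE m δ δ' c ∘ (m + 1 + ·) = δ' := by
  ext j
  simp [catE, show ¬ m + 1 + j < m by omega, show m + 1 + j ≠ m by omega]

variable {μ e l δ μ' e' l' δ' : ℕ → ℝ} {c t : ℝ}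

theorem arrive_cat_of_le {k : ℕ} (hk : k ≤ m) :
    arrive (catV m μ μ') (catV m e e') (catV m l l') (catE m δ δ' c) t k =
      arrive μ e l δ t k :=
  arrive_congr fun i hi => by simp [hi.le.trans hk, hi.trans_le hk]

theorem timeWarp_cat_prefix :
    timeWarp m (catV m μ μ') (catV m e e') (catV m l l') (catE m δ δ' c) t =
      timeWarp m μ e l δ t :=
  Finset.sum_congr rfl fun k hk => by
    have hk : k ≤ m := Nat.lt_succ_iff.mp (Finset.mem_range.mp hk)
    rw [arrive_cat_of_le hk, catV_of_le hk]

theorem waiting_cat_prefix :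
    waiting m (catV m μ μ') (catV m e e') (catV m l l') (catE m δ δ' c) t =
      waiting m μ e l δ t :=
  Finset.sum_congr rfl fun k hk => by
    have hk : k ≤ m := Nat.lt_succ_iff.mp (Finset.mem_range.mp hk)
    rw [arrive_cat_of_le hk, catV_of_le hk]

theorem duration_cat_prefix :
    duration m (catV m μ μ') (catV m e e') (catV m l l') (catE m δ δ' c) t =
      duration m μ e l δ t := by
  unfold duration
  rw [waiting_cat_prefix,
    Finset.sum_congr rfl fun k hk => catV_of_le (Nat.lt_succ_iff.mp (Finset.mem_range.mp hk)),
    Finset.sum_congr rfl fun k hk => catE_of_lt (Finset.mem_range.mp hk)]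

end Concatenation

theorem concat_timeWarp_duration_decomposition_general
    (m n : ℕ) (μ e l δ μ' e' l' δ' : ℕ → ℝ) (c : ℝ)
    (hel : ∀ k ≤ m, e k ≤ l k) (t : ℝ) :
    timeWarp (m + n + 1) (catV m μ μ') (catV m e e') (catV m l l')
        (catE m δ δ' c) t =
      timeWarp m μ e l δ t +
        timeWarp n μ' e' l' δ'
          (t + duration m μ e l δ t - timeWarp m μ e l δ t + c) ∧
    duration (m + n + 1) (catV m μ μ') (catV m e e') (catV m l l')
        (catE m δ δ' c) t =
      duration m μ e l δ t + c +
        duration n μ' e' l' δ'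
          (t + duration m μ e l δ t - timeWarp m μ e l δ t + c) := by
  have h_junction :
      arrive (catV m μ μ') (catV m e e') (catV m l l') (catE m δ δ' c) t (m + 1) =
        t + duration m μ e l δ t - timeWarp m μ e l δ t + c := by
    rw [arrive_succ_eq_duration_sub_timeWarp fun k hk => by simpa [hk] using hel k hk,
      duration_cat_prefix, timeWarp_cat_prefix, catE_self]
  rw [timeWarp_add, duration_add, timeWarp_cat_prefix, duration_cat_prefix, catE_self,
    h_junction]
  simp only [catV_comp_add, catE_comp_add, and_self]

/-- The schedule of the concatenation σ ⊕ δ ⊕ σ′ decomposes: with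
b(t) = t + D_σ(t) - TW_σ(t) + δ the arrival at the first visit of σ′, the time
warp and duration split as TW_σ(t) + TW_σ′(b(t)) and D_σ(t) + δ + D_σ′(b(t)). -/
theorem concat_timeWarp_duration_decomposition
    (m n : ℕ) (μ e l δ μ' e' l' δ' : ℕ → ℝ) (c : ℝ)
    (hμ : ∀ k ≤ m, 0 ≤ μ k) (hel : ∀ k ≤ m, e k ≤ l k) (hδ : ∀ k < m, 0 ≤ δ k)
    (hμ' : ∀ k ≤ n, 0 ≤ μ' k) (hel' : ∀ k ≤ n, e' k ≤ l' k)
    (hδ' : ∀ k < n, 0 ≤ δ' k) (hc : 0 ≤ c) (t : ℝ) :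
    timeWarp (m + n + 1) (catV m μ μ') (catV m e e') (catV m l l')
        (catE m δ δ' c) t =
      timeWarp m μ e l δ t +
        timeWarp n μ' e' l' δ'
          (t + duration m μ e l δ t - timeWarp m μ e l δ t + c) ∧
    duration (m + n + 1) (catV m μ μ') (catV m e e') (catV m l l')
        (catE m δ δ' c) t =
      duration m μ e l δ t + c +
        duration n μ' e' l' δ'
          (t + duration m μ e l δ t - timeWarp m μ e l δ t + c) :=
  concat_timeWarp_duration_decomposition_general m n μ e l δ μ' e' l' δ' c hel t
end
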